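/- Suppose every round of a core-language algorithm has a uni instruction, none of the round predicates ψ↾_k,…,ψ↾_l is an equalizer, and all rounds k,…,l have mult instructions. If set(f') ⊆ fire_k(f, ψ) and ? ∉ set(f'), then the sequence of round transitions f →[ψ↾_k]_k … →[ψ↾_l]_l f' is possible. -/

import Mathlib

/-! Since no round predicate `ψ↾_i` is an equalizer, each process may hear its own sub-multiset,
so a round produces a tuple as soon as each of its entries is produced by some heard-of
multiset. In particular round `k` sends `f` to any tuple over `fire_k(f, ψ)`, and it suffices
to find, backwards from `f'`, a source for each round `k < i ≤ l` whose values are among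
those of its target. A constant tuple is its own source, through the uni instruction. If the
target takes both values `a` and `b`, the source depends on the first mult instruction: for
`min` it is one `a` among `b`s (hearing everything gives `a`, hearing only the `b`s gives `b`
by uni); for `smor` it is an even split with the extra `a` for odd `n` (ties go to `a`, and
dropping one `a` leaves `b` most frequent). Every heard-of multiset used has at least `n - 2`
values, which clears all thresholds once `n` is large because they are all below `1`. -/

open Classical

namespace HO

/-! ### Values

`none` is the undefined value `?`; defined values are natural numbers, where
`some 0` plays the role of `a` and `some 1` the role of `b` (so `a < b`). -/

abbrev Val := Option ℕ

def aVal : ℕ := 0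
def bVal : ℕ := 1

/-! ### Operations -/

inductive Op where
  | min : Op
  | smor : Op

/-- Minimum of a multiset of defined values (`none` if the multiset is empty). -/
noncomputable def msMin (S : Multiset ℕ) : Option ℕ :=
  if h : S.toFinset.Nonempty then some (S.toFinset.min' h) else none

/-- Smallest most frequent value of a multiset (`none` if the multiset is empty). -/
noncomputable def msSmor (S : Multiset ℕ) : Option ℕ :=
  if h : (S.toFinset.filter fun v => ∀ w ∈ S.toFinset, S.count w ≤ S.count v).Nonempty
  then some ((S.toFinset.filter fun v => ∀ w ∈ S.toFinset, S.count w ≤ S.count v).min' h)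
  else none

noncomputable def Op.apply : Op → Multiset ℕ → Option ℕ
  | Op.min, S => msMin S
  | Op.smor, S => msSmor S

/-! ### Rounds

A round consists of at most one `uni` instruction followed by a list of `mult`
instructions with non-increasing thresholds, all thresholds lying in `[0,1)`. -/

structure Round where
  uniThr : Option ℝ
  mults : List (ℝ × Op)
  wfU : ∀ t ∈ uniThr, 0 ≤ t ∧ t < 1
  wfM : ∀ q ∈ mults, 0 ≤ q.1 ∧ q.1 < 1
  sorted : (mults.map Prod.fst).Chain' (· ≥ ·)

def Round.hasUni (R : Round) : Prop := R.uniThr.isSome = true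
def Round.hasMult (R : Round) : Prop := R.mults ≠ []

/-- `thr_u^i`: the threshold of the uni instruction, `-1` if absent. -/
noncomputable def Round.thrU (R : Round) : ℝ := R.uniThr.getD (-1)

noncomputable def minThr : List ℝ → ℝ
  | [] => -1
  | [t] => t
  | t :: ts => min t (minThr ts)

/-- `thr_m^{i,k}`: the smallest threshold of a mult instruction, `-1` if absent. -/
noncomputable def Round.thrM (R : Round) : ℝ := minThr (R.mults.map Prod.fst)

/-- Result of the first applicable `mult` instruction. -/
noncomputable def firstMult (n : ℕ) (S : Multiset ℕ) : List (ℝ × Op) → Option ℕ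
  | [] => none
  | (t, op) :: rest =>
      if 1 < S.toFinset.card ∧ t * n < (S.card : ℝ) then op.apply S
      else firstMult n S rest

/-- `update_i(H)`: the result of the first instruction of the round whose condition
is satisfied by `H − {?}`, and `?` (i.e. `none`) if no condition applies. -/
noncomputable def Round.update (R : Round) (n : ℕ) (H : Multiset Val) : Option ℕ :=
  if ∃ t ∈ R.uniThr,
      (H.filterMap id).toFinset.card = 1 ∧ t * n < ((H.filterMap id).card : ℝ)
  then msMin (H.filterMap id)
  else firstMult n (H.filterMap id) R.mults

/-! ### Communication predicates for a round -/

/-- A conjunction of atomic communication predicates for one round: possibly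
`φ_=` (field `eq`) and possibly `φ_thr` (field `thr`, with `0 ≤ thr < 1`). -/
structure RoundPred where
  eq : Bool
  thr : Option ℝ
  wf : ∀ t ∈ thr, 0 ≤ t ∧ t < 1

/-- `thr_i(ψ)`: the threshold appearing in the predicate, `-1` if absent. -/
noncomputable def RoundPred.thrVal (φ : RoundPred) : ℝ := φ.thr.getD (-1)

def RoundPred.isEqualizer (φ : RoundPred) : Prop := φ.eq = true

/-- Satisfaction of a round predicate by a tuple of heard-of multisets. -/
def RoundPred.sat {α : Type} (φ : RoundPred) (n : ℕ) (Hs : Fin n → Multiset α) : Prop :=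
  (φ.eq = true → ∀ p q, Hs p = Hs q) ∧
  ∀ t ∈ φ.thr, ∀ p, t * n < ((Hs p).card : ℝ)

/-- Logical implication between round predicates. -/
def RoundPred.implies (φ φ' : RoundPred) : Prop :=
  ∀ (α : Type) (n : ℕ) (Hs : Fin n → Multiset α), φ.sat n Hs → φ'.sat n Hs

/-! ### Tuples of values -/

/-- The multiset of values of a tuple. -/
def msetOf {n : ℕ} (f : Fin n → Val) : Multiset Val := Finset.univ.val.map f

def soloB (n : ℕ) : Fin n → Val := fun _ => some bVal
def soloA (n : ℕ) : Fin n → Val := fun _ => some aVal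
def soloQ (n : ℕ) : Fin n → Val := fun _ => none

/-- `bias(θ)`: a tuple over `{a,b}` with `θ·n` entries equal to `b`. -/
def isBias {n : ℕ} (θ : ℝ) (f : Fin n → Val) : Prop :=
  (∀ p, f p = some aVal ∨ f p = some bVal) ∧
  ((Finset.univ.filter fun p => f p = some bVal).card : ℝ) = θ * n

/-- `spread = bias(1/2)`. -/
def isSpread {n : ℕ} (f : Fin n → Val) : Prop := isBias (1/2) f

/-- `bias^?(θ)`: a tuple over `{?,b}` with `θ·n` entries equal to `b`. -/
def isBiasQ {n : ℕ} (θ : ℝ) (f : Fin n → Val) : Prop :=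
  (∀ p, f p = none ∨ f p = some bVal) ∧
  ((Finset.univ.filter fun p => f p = some bVal).card : ℝ) = θ * n

/-- `bias_a^?(θ)`: a tuple over `{?,a}` with `θ·n` entries equal to `a`. -/
def isBiasQa {n : ℕ} (θ : ℝ) (f : Fin n → Val) : Prop :=
  (∀ p, f p = none ∨ f p = some aVal) ∧
  ((Finset.univ.filter fun p => f p = some aVal).card : ℝ) = θ * n

/-! ### Round transitions -/

/-- Round transition `f →[φ]_i f'`: every process receives a sub-multiset of the
multiset of sent values, the tuple of heard-of multisets jointly satisfies `φ`,
and every process updates its variable accordingly. -/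
def roundTrans (R : Round) (φ : RoundPred) {n : ℕ} (f f' : Fin n → Val) : Prop :=
  ∃ Hs : Fin n → Multiset Val,
    (∀ p, Hs p ≤ msetOf f) ∧ φ.sat n Hs ∧ ∀ p, f' p = R.update n (Hs p)

/-- `d ∈ fire_i(f,φ)`. -/
def fire (R : Round) (φ : RoundPred) {n : ℕ} (f : Fin n → Val) (d : Val) : Prop :=
  ∃ f' : Fin n → Val, roundTrans R φ f f' ∧ ∃ p, f' p = d

/-! ### Algorithms -/

/-- An algorithm of the core language: rounds `1,…,r` (`r ≥ 2`), with a designated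
input-update round `ir` (`1 ≤ ir < r`). -/
structure Algo where
  r : ℕ
  rounds : ℕ → Round
  ir : ℕ
  two_le_r : 2 ≤ r
  one_le_ir : 1 ≤ ir
  ir_lt_r : ir < r

noncomputable def Algo.thrU (A : Algo) (i : ℕ) : ℝ := (A.rounds i).thrU
noncomputable def Algo.thrM (A : Algo) (i : ℕ) : ℝ := (A.rounds i).thrM
def Algo.hasUni (A : Algo) (i : ℕ) : Prop := (A.rounds i).hasUni
def Algo.hasMult (A : Algo) (i : ℕ) : Prop := (A.rounds i).hasMult

/-- A phase predicate: a conjunction of atomic predicates for every round. -/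
abbrev PhasePred := ℕ → RoundPred

/-- Phase transition `(f,d) →ψ (f',d')`. -/
def phaseTrans (A : Algo) (ψ : PhasePred) {n : ℕ} (f d f' d' : Fin n → Val) : Prop :=
  ∃ g : ℕ → Fin n → Val,
    g 0 = f ∧
    (∀ i, 1 ≤ i → i ≤ A.r → roundTrans (A.rounds i) (ψ i) (g (i - 1)) (g i)) ∧
    (∀ p, f' p = if g A.ir p = none then f p else g A.ir p) ∧
    (∀ p, d' p = if d p = none then g A.r p else d p)

/-- A chain of round transitions for rounds `k,…,l`. -/
def roundChain (A : Algo) (ψ : PhasePred) (k l : ℕ) {n : ℕ} (f f' : Fin n → Val) : Prop :=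
  ∃ g : ℕ → Fin n → Val,
    g (k - 1) = f ∧ g l = f' ∧
    ∀ i, k ≤ i → i ≤ l → roundTrans (A.rounds i) (ψ i) (g (i - 1)) (g i)

/-! ### Syntactic notions -/

/-- Round `i` is preserving w.r.t. `ψ`. -/
def Algo.preserving (A : Algo) (ψ : PhasePred) (i : ℕ) : Prop :=
  ¬ A.hasUni i ∨ ¬ A.hasMult i ∨ (ψ i).thrVal < max (A.thrU i) (A.thrM i)

/-- Round `i` is solo-safe w.r.t. `ψ`. -/
def Algo.soloSafe (A : Algo) (ψ : PhasePred) (i : ℕ) : Prop :=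
  0 ≤ A.thrU i ∧ A.thrU i ≤ (ψ i).thrVal

/-- The border threshold `thr̄ = max(1 − thr_u^1, 1 − thr_m^{1,k}/2)`. -/
noncomputable def Algo.borderThr (A : Algo) : ℝ :=
  max (1 - A.thrU 1) (1 - A.thrM 1 / 2)

/-- `ψ` is a decider: all rounds are solo-safe w.r.t. `ψ`. -/
def Algo.decider (A : Algo) (ψ : PhasePred) : Prop :=
  ∀ i, 1 ≤ i → i ≤ A.r → A.soloSafe ψ i

/-- `ψ` is a unifier. -/
def Algo.unifier (A : Algo) (ψ : PhasePred) : Prop :=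
  A.thrM 1 ≤ (ψ 1).thrVal ∧
  (A.thrU 1 ≤ (ψ 1).thrVal ∨ A.borderThr ≤ (ψ 1).thrVal) ∧
  ∃ i, 1 ≤ i ∧ i ≤ A.ir ∧ (ψ i).isEqualizer ∧
    (∀ j, 2 ≤ j → j ≤ i → ¬ A.preserving ψ j) ∧
    (∀ j, i < j → j ≤ A.ir → A.soloSafe ψ j)

/-- The algorithm is syntactically safe. -/
def Algo.syntSafe (A : Algo) : Prop :=
  A.hasMult 1 ∧
  (∀ i, 1 ≤ i → i ≤ A.r → A.hasUni i) ∧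
  (∀ q ∈ (A.rounds 1).mults, q.2 = Op.smor) ∧
  1 - A.thrU (A.ir + 1) ≤ A.thrM 1 / 2 ∧
  1 - A.thrU (A.ir + 1) ≤ A.thrU 1

/-- Assumption (A) relative to the global predicate `gl`. -/
def Algo.assumptionA (A : Algo) (gl : PhasePred) : Prop :=
  ∀ i, 1 ≤ i → i ≤ A.r →
    (∀ j, 1 ≤ j → j < i → ¬ A.preserving gl j) →
    (A.hasUni i → (gl i).thrVal ≤ A.thrU i) ∧
    (A.hasMult i → (gl i).thrVal ≤ A.thrM i)

/-- Proviso (P): the global predicate has no equalizer and round `ir+1` has no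
mult instruction. -/
def Algo.provisoP (A : Algo) (gl : PhasePred) : Prop :=
  (∀ i, 1 ≤ i → i ≤ A.r → ¬ (gl i).isEqualizer) ∧ ¬ A.hasMult (A.ir + 1)

/-- Removing all mult instructions of a round. -/
def Round.dropMults (R : Round) : Round :=
  { uniThr := R.uniThr, mults := [], wfU := R.wfU,
    wfM := by simp, sorted := by first | exact List.IsChain.nil | exact List.chain'_nil | simp [List.Chain'] }

/-- Removing all mult instructions of round `i` of an algorithm. -/
def Algo.dropMultsAt (A : Algo) (i : ℕ) : Algo :=
  { A with rounds := fun j => if j = i then (A.rounds j).dropMults else A.rounds j }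

/-! ### Communication predicates, executions, consensus -/

/-- A communication predicate `(G ψ̄) ∧ F(ψ^1 ∧ F(ψ^2 ∧ … ∧ F ψ^k))`:
a global phase predicate and sporadic phase predicates `ψ^1,…,ψ^k`. -/
structure CommPred where
  glob : PhasePred
  k : ℕ
  spor : ℕ → PhasePred

/-- Roundwise implication between phase predicates of an algorithm. -/
def predImplies (A : Algo) (ψ ψ' : PhasePred) : Prop :=
  ∀ i, 1 ≤ i → i ≤ A.r → (ψ i).implies (ψ' i)

/-- An execution of an algorithm respecting a communication predicate: an infinite
sequence of phase transitions under the global predicate, together with an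
increasing sequence of times at which the sporadic predicates hold. -/
structure Exec (A : Algo) (C : CommPred) (n : ℕ) where
  inp : ℕ → Fin n → Val
  dec : ℕ → Fin n → Val
  inp0 : ∀ p, inp 0 p ≠ none
  dec0 : ∀ p, dec 0 p = none
  step : ∀ s, phaseTrans A C.glob (inp s) (dec s) (inp (s + 1)) (dec (s + 1))
  sporTime : ℕ → ℕ
  mono : StrictMono sporTime
  sporStep : ∀ i, 1 ≤ i → i ≤ C.k →
    phaseTrans A (C.spor i) (inp (sporTime i)) (dec (sporTime i))
      (inp (sporTime i + 1)) (dec (sporTime i + 1))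

/-- Agreement: in every reachable state, any two non-`?` decision values coincide. -/
def Agreement (A : Algo) (C : CommPred) : Prop :=
  ∀ n, 0 < n → ∀ E : Exec A C n, ∀ s p q v w,
    E.dec s p = some v → E.dec s q = some w → v = w

/-- Termination: every execution reaches a state where all processes have decided. -/
def Termination (A : Algo) (C : CommPred) : Prop :=
  ∀ n, 0 < n → ∀ E : Exec A C n, ∃ s, ∀ p, E.dec s p ≠ none

/-- Solving consensus: agreement and termination. -/
def SolvesConsensus (A : Algo) (C : CommPred) : Prop :=
  Agreement A C ∧ Termination A C

/-- A tuple over the two values `a`, `b` and the undefined value `?`. -/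
def twoValuedQ {n : ℕ} (f : Fin n → Val) : Prop :=
  ∀ p, f p = none ∨ f p = some aVal ∨ f p = some bVal

open Filter

lemma msMin_eq_some {S : Multiset ℕ} {v : ℕ} (hv : v ∈ S) (hle : ∀ w ∈ S, v ≤ w) :
    msMin S = some v := by
  have hne : S.toFinset.Nonempty := ⟨v, Multiset.mem_toFinset.2 hv⟩
  rw [msMin, dif_pos hne, Option.some_inj]
  exact le_antisymm (Finset.min'_le _ _ (Multiset.mem_toFinset.2 hv))
    (Finset.le_min' _ _ _ fun w hw => hle w (Multiset.mem_toFinset.1 hw))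

lemma msSmor_eq_some {S : Multiset ℕ} {v : ℕ} (hv : v ∈ S)
    (hmost : ∀ w ∈ S, S.count w ≤ S.count v)
    (hsmallest : ∀ w ∈ S, S.count v ≤ S.count w → v ≤ w) :
    msSmor S = some v := by
  have hmem : v ∈ S.toFinset.filter fun u => ∀ w ∈ S.toFinset, S.count w ≤ S.count u := by
    simpa using ⟨hv, hmost⟩
  rw [msSmor, dif_pos ⟨v, hmem⟩, Option.some_inj]
  refine le_antisymm (Finset.min'_le _ _ hmem) (Finset.le_min' _ _ _ fun w hw => ?_)
  simp only [Finset.mem_filter, Multiset.mem_toFinset] at hw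
  exact hsmallest w hw.1 (hw.2 v hv)

section TwoValues

variable {x y : ℕ} {i j : ℕ}

lemma filterMap_id_replicate_some (c v : ℕ) :
    (Multiset.replicate c (some v)).filterMap id = Multiset.replicate c v := by
  rw [← Multiset.map_replicate, Multiset.filterMap_map]
  exact Multiset.filterMap_some _

lemma filterMap_id_pair (i j x y : ℕ) :
    (Multiset.replicate i (some x) + Multiset.replicate j (some y)).filterMap id
      = Multiset.replicate i x + Multiset.replicate j y := by
  rw [Multiset.filterMap_add, filterMap_id_replicate_some, filterMap_id_replicate_some]

lemma card_toFinset_pair (hxy : x ≠ y) (hi : i ≠ 0) (hj : j ≠ 0) :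
    (Multiset.replicate i x + Multiset.replicate j y).toFinset.card = 2 := by
  rw [Multiset.toFinset_add, Multiset.toFinset_replicate, Multiset.toFinset_replicate,
    if_neg hi, if_neg hj]
  exact Finset.card_pair hxy

lemma mem_pair_left (hi : i ≠ 0) : x ∈ Multiset.replicate i x + Multiset.replicate j y :=
  Multiset.mem_add.2 (Or.inl (Multiset.mem_replicate.2 ⟨hi, rfl⟩))

lemma mem_pair_right (hj : j ≠ 0) : y ∈ Multiset.replicate i x + Multiset.replicate j y :=
  Multiset.mem_add.2 (Or.inr (Multiset.mem_replicate.2 ⟨hj, rfl⟩))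

lemma forall_mem_pair {p : ℕ → Prop} (hx : p x) (hy : p y) :
    ∀ w ∈ Multiset.replicate i x + Multiset.replicate j y, p w := by
  simp only [Multiset.mem_add, Multiset.mem_replicate]
  rintro w (⟨-, rfl⟩ | ⟨-, rfl⟩) <;> assumption

lemma msMin_pair (hxy : x < y) (hi : i ≠ 0) :
    msMin (Multiset.replicate i x + Multiset.replicate j y) = some x :=
  msMin_eq_some (mem_pair_left hi) (forall_mem_pair le_rfl hxy.le)

lemma msSmor_pair_of_le (hxy : x < y) (hi : i ≠ 0) (hji : j ≤ i) :
    msSmor (Multiset.replicate i x + Multiset.replicate j y) = some x := by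
  refine msSmor_eq_some (mem_pair_left hi) (forall_mem_pair le_rfl ?_)
    (forall_mem_pair (fun _ => le_rfl) (fun _ => hxy.le))
  simpa [Multiset.count_replicate, hxy.ne, hxy.ne'] using hji

lemma msSmor_pair_of_lt (hxy : x < y) (hij : i < j) :
    msSmor (Multiset.replicate i x + Multiset.replicate j y) = some y := by
  have hx : (Multiset.replicate i x + Multiset.replicate j y).count x = i := by
    simp [Multiset.count_replicate, hxy.ne']
  have hy : (Multiset.replicate i x + Multiset.replicate j y).count y = j := by
    simp [Multiset.count_replicate, hxy.ne]
  refine msSmor_eq_some (mem_pair_right (by omega)) (forall_mem_pair ?_ le_rfl)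
    (forall_mem_pair (fun h => ?_) (fun _ => le_rfl))
  · rw [hx, hy]; exact hij.le
  · rw [hx, hy] at h; omega

end TwoValues

lemma aVal_lt_bVal : aVal < bVal := Nat.zero_lt_one

lemma card_msetOf {n : ℕ} (f : Fin n → Val) : (msetOf f).card = n := by
  simp [msetOf]

def cutTuple (n c : ℕ) : Fin n → Val := fun p => if (p : ℕ) < c then some aVal else some bVal

lemma msetOf_cutTuple {n c : ℕ} (hc : c ≤ n) :
    msetOf (cutTuple n c)
      = Multiset.replicate c (some aVal) + Multiset.replicate (n - c) (some bVal) := by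
  have hlow : (Finset.univ.filter fun p : Fin n => (p : ℕ) < c).card = c := by
    rw [Fin.card_filter_val_lt, min_eq_right hc]
  have hhigh : (Finset.univ.filter fun p : Fin n => ¬ (p : ℕ) < c).card = n - c := by
    rw [Finset.filter_not, Finset.card_sdiff_of_subset (Finset.filter_subset _ _), hlow,
      Finset.card_univ, Fintype.card_fin]
  rw [msetOf, ← Multiset.filter_add_not (fun p : Fin n => (p : ℕ) < c) Finset.univ.val,
    Multiset.map_add]
  congr 1
  · rw [Multiset.map_congr (f := cutTuple n c) (g := fun _ => some aVal) rfl
        fun p hp => if_pos (Multiset.of_mem_filter hp),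
      Multiset.map_const', ← Finset.filter_val, Finset.card_val, hlow]
  · rw [Multiset.map_congr (f := cutTuple n c) (g := fun _ => some bVal) rfl
        fun p hp => if_neg (Multiset.of_mem_filter (p := fun p : Fin n => ¬ (p : ℕ) < c) hp),
      Multiset.map_const', ← Finset.filter_val, Finset.card_val, hhigh]

lemma Round.update_replicate_some {R : Round} {t : ℝ} (ht : t ∈ R.uniThr) {n c : ℕ}
    (hc : c ≠ 0) (hcard : t * n < c) (v : ℕ) :
    R.update n (Multiset.replicate c (some v)) = some v := by
  rw [Round.update, filterMap_id_replicate_some,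
    if_pos ⟨t, ht, by simp [hc], by rwa [Multiset.card_replicate]⟩]
  exact msMin_eq_some (Multiset.mem_replicate.2 ⟨hc, rfl⟩)
    fun w hw => (Multiset.eq_of_mem_replicate hw).ge

lemma Round.update_pair {R : Round} {t : ℝ} {op : Op} {rest : List (ℝ × Op)}
    (hR : R.mults = (t, op) :: rest) {n i j x y : ℕ} (hxy : x ≠ y) (hi : i ≠ 0) (hj : j ≠ 0)
    (hcard : t * n < (i + j : ℕ)) :
    R.update n (Multiset.replicate i (some x) + Multiset.replicate j (some y))
      = op.apply (Multiset.replicate i x + Multiset.replicate j y) := by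
  have htwo := card_toFinset_pair hxy hi hj
  rw [Round.update, filterMap_id_pair, if_neg (by rintro ⟨-, -, h, -⟩; omega), hR, firstMult,
    if_pos ⟨by omega, by simpa using hcard⟩]

def Round.thresholdsWith (R : Round) (φ : RoundPred) : List ℝ :=
  φ.thr.toList ++ R.uniThr.toList ++ R.mults.map Prod.fst

def LargeSystem (R : Round) (φ : RoundPred) (n : ℕ) : Prop :=
  ∀ t ∈ R.thresholdsWith φ, t * n + 2 < n

namespace LargeSystem

variable {R : Round} {φ : RoundPred} {n c : ℕ} {t : ℝ}

lemma lt_of_mem (h : LargeSystem R φ n) (ht : t ∈ R.thresholdsWith φ) (hc : n ≤ c + 2) :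
    t * n < c := by
  have hlarge := h t ht
  have hcR : (n : ℝ) ≤ c + 2 := by exact_mod_cast hc
  linarith

lemma thr_lt (h : LargeSystem R φ n) (ht : t ∈ φ.thr) (hc : n ≤ c + 2) : t * n < c :=
  h.lt_of_mem (by simp [Round.thresholdsWith, Option.mem_def.1 ht]) hc

lemma uni_lt (h : LargeSystem R φ n) (ht : t ∈ R.uniThr) (hc : n ≤ c + 2) : t * n < c :=
  h.lt_of_mem (by simp [Round.thresholdsWith, Option.mem_def.1 ht]) hc

lemma mult_lt {op : Op} (h : LargeSystem R φ n) (ht : (t, op) ∈ R.mults) (hc : n ≤ c + 2) :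
    t * n < c :=
  h.lt_of_mem (List.mem_append.2 (Or.inr (List.mem_map.2 ⟨_, ht, rfl⟩))) hc

end LargeSystem

lemma eventually_mul_add_two_lt {t : ℝ} (ht : t < 1) :
    ∀ᶠ n : ℕ in atTop, t * n + 2 < n := by
  have hgrow : Tendsto (fun n : ℕ => (1 - t) * n) atTop atTop :=
    tendsto_natCast_atTop_atTop.const_mul_atTop (by linarith)
  filter_upwards [hgrow.eventually_gt_atTop 2] with n hn
  linarith

lemma eventually_largeSystem (R : Round) (φ : RoundPred) :
    ∀ᶠ n in atTop, LargeSystem R φ n := by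
  have hall : ∀ᶠ n : ℕ in atTop, ∀ t ∈ (R.thresholdsWith φ).toFinset, t * n + 2 < n := by
    refine (eventually_all_finset _).2 fun t ht => eventually_mul_add_two_lt ?_
    simp only [List.mem_toFinset, Round.thresholdsWith, List.mem_append, Option.mem_toList,
      List.mem_map] at ht
    rcases ht with (ht | ht) | ⟨q, hq, rfl⟩
    · exact (φ.wf t ht).2
    · exact (R.wfU t ht).2
    · exact (R.wfM q hq).2
  filter_upwards [hall] with n hn t ht using hn t (List.mem_toFinset.2 ht)

section Transitions

variable {R : Round} {φ : RoundPred} {n : ℕ}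

lemma roundTrans_of_forall_exists_heard (hφ : ¬ φ.isEqualizer) {f T : Fin n → Val}
    (hH : ∀ p, ∃ H ≤ msetOf f, (∀ t ∈ φ.thr, t * n < (H.card : ℝ)) ∧
      R.update n H = T p) :
    roundTrans R φ f T := by
  choose H hle hcard hupd using hH
  exact ⟨H, hle, ⟨fun h => absurd h hφ, fun t ht p => hcard p t ht⟩,
    fun p => (hupd p).symm⟩

lemma roundTrans_of_forall_fire (hφ : ¬ φ.isEqualizer) {f T : Fin n → Val}
    (hT : ∀ p, fire R φ f (T p)) : roundTrans R φ f T := by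
  refine roundTrans_of_forall_exists_heard hφ fun p => ?_
  obtain ⟨f', ⟨Hs, hle, hsat, hupd⟩, q, hq⟩ := hT p
  exact ⟨Hs q, hle q, fun t ht => hsat.2 t ht q, (hupd q).symm.trans hq⟩

lemma roundTrans_const (hU : R.hasUni) (hφ : ¬ φ.isEqualizer) (hn : LargeSystem R φ n)
    (hn0 : n ≠ 0) (v : ℕ) : roundTrans R φ (fun _ : Fin n => some v) (fun _ => some v) := by
  obtain ⟨tu, htu⟩ := Option.isSome_iff_exists.1 hU
  have hmset : msetOf (fun _ : Fin n => some v) = Multiset.replicate n (some v) := by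
    simp [msetOf]
  refine roundTrans_of_forall_exists_heard hφ fun _ => ⟨_, hmset.ge, fun t ht => ?_, ?_⟩
  · rw [Multiset.card_replicate]; exact hn.thr_lt ht (by omega)
  · exact R.update_replicate_some htu hn0 (hn.uni_lt htu (by omega)) v

lemma roundTrans_cutTuple_one_of_min {t : ℝ} {rest : List (ℝ × Op)}
    (hR : R.mults = (t, Op.min) :: rest) (hU : R.hasUni) (hφ : ¬ φ.isEqualizer)
    (hn : LargeSystem R φ n) (h2 : 2 ≤ n) {T : Fin n → Val}
    (hT : ∀ p, T p = some aVal ∨ T p = some bVal) :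
    roundTrans R φ (cutTuple n 1) T := by
  obtain ⟨tu, htu⟩ := Option.isSome_iff_exists.1 hU
  have hmset := msetOf_cutTuple (n := n) (c := 1) (by omega)
  refine roundTrans_of_forall_exists_heard hφ fun p => ?_
  rcases hT p with hTp | hTp <;> rw [hTp]
  · refine ⟨_, le_rfl, fun t ht => ?_, ?_⟩
    · rw [card_msetOf]; exact hn.thr_lt ht (by omega)
    · rw [hmset, R.update_pair hR aVal_lt_bVal.ne one_ne_zero (by omega)
        (hn.mult_lt (hR ▸ List.mem_cons_self) (by omega))]
      exact msMin_pair aVal_lt_bVal one_ne_zero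
  · refine ⟨_, hmset ▸ Multiset.le_add_left _ _, fun t ht => ?_, ?_⟩
    · rw [Multiset.card_replicate]; exact hn.thr_lt ht (by omega)
    · exact R.update_replicate_some htu (by omega) (hn.uni_lt htu (by omega)) bVal

lemma roundTrans_cutTuple_half_of_smor {t : ℝ} {rest : List (ℝ × Op)}
    (hR : R.mults = (t, Op.smor) :: rest) (hφ : ¬ φ.isEqualizer) (hn : LargeSystem R φ n)
    (h4 : 4 ≤ n) {T : Fin n → Val} (hT : ∀ p, T p = some aVal ∨ T p = some bVal) :
    roundTrans R φ (cutTuple n ((n + 1) / 2)) T := by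
  have hmset := msetOf_cutTuple (n := n) (c := (n + 1) / 2) (by omega)
  refine roundTrans_of_forall_exists_heard hφ fun p => ?_
  rcases hT p with hTp | hTp <;> rw [hTp]
  · refine ⟨_, le_rfl, fun t ht => ?_, ?_⟩
    · rw [card_msetOf]; exact hn.thr_lt ht (by omega)
    · rw [hmset, R.update_pair hR aVal_lt_bVal.ne (by omega) (by omega)
        (hn.mult_lt (hR ▸ List.mem_cons_self) (by omega))]
      exact msSmor_pair_of_le aVal_lt_bVal (by omega) (by omega)
  · refine ⟨Multiset.replicate (n - (n + 1) / 2 - 1) (some aVal)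
        + Multiset.replicate (n - (n + 1) / 2) (some bVal),
      hmset ▸ add_le_add_left (Multiset.replicate_mono _ (by omega)) _, fun t ht => ?_, ?_⟩
    · rw [Multiset.card_add, Multiset.card_replicate, Multiset.card_replicate]
      exact_mod_cast hn.thr_lt ht (by omega)
    · rw [R.update_pair hR aVal_lt_bVal.ne (by omega) (by omega)
        (hn.mult_lt (hR ▸ List.mem_cons_self) (by omega))]
      exact msSmor_pair_of_lt aVal_lt_bVal (by omega)

lemma exists_range_subset_roundTrans (hU : R.hasUni) (hM : R.hasMult) (hφ : ¬ φ.isEqualizer)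
    (hn : LargeSystem R φ n) (h4 : 4 ≤ n) {T : Fin n → Val}
    (hT : ∀ p, T p = some aVal ∨ T p = some bVal) :
    ∃ S : Fin n → Val, Set.range S ⊆ Set.range T ∧ roundTrans R φ S T := by
  by_cases hconst : ∃ v, ∀ p, T p = some v
  · obtain ⟨v, hv⟩ := hconst
    obtain rfl : T = fun _ => some v := funext hv
    exact ⟨_, subset_rfl, roundTrans_const hU hφ hn (by omega) v⟩
  have ha : some aVal ∈ Set.range T := by
    by_contra h
    exact hconst ⟨bVal, fun p => (hT p).resolve_left fun hp => h ⟨p, hp⟩⟩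
  have hb : some bVal ∈ Set.range T := by
    by_contra h
    exact hconst ⟨aVal, fun p => (hT p).resolve_right fun hp => h ⟨p, hp⟩⟩
  have hcut : ∀ c, Set.range (cutTuple n c) ⊆ Set.range T := fun c =>
    Set.range_subset_iff.2 fun p => by unfold cutTuple; split_ifs <;> assumption
  obtain ⟨⟨t, op⟩, rest, hR⟩ := List.exists_cons_of_ne_nil hM
  cases op with
  | min => exact ⟨_, hcut 1, roundTrans_cutTuple_one_of_min hR hU hφ hn (by omega) hT⟩
  | smor => exact ⟨_, hcut _, roundTrans_cutTuple_half_of_smor hR hφ hn h4 hT⟩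

end Transitions

lemma roundChain_of_backward_invariant {A : Algo} {ψ : PhasePred} {k l n : ℕ} (hk : 1 ≤ k)
    (hkl : k ≤ l) {f : Fin n → Val} {P : (Fin n → Val) → Prop}
    (hfirst : ∀ T, P T → roundTrans (A.rounds k) (ψ k) f T)
    (hback : ∀ i, k < i → i ≤ l → ∀ T, P T →
      ∃ S, P S ∧ roundTrans (A.rounds i) (ψ i) S T) :
    ∀ T, P T → roundChain A ψ k l f T := by
  induction l, hkl using Nat.le_induction with
  | base =>
    intro T hT
    refine ⟨fun i => if i < k then f else T, if_pos (by omega), if_neg (lt_irrefl k), ?_⟩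
    intro i hki hik
    obtain rfl : i = k := le_antisymm hik hki
    simp only [if_pos (show i - 1 < i by omega), lt_irrefl, if_false]
    exact hfirst T hT
  | succ l hkl ih =>
    intro T hT
    obtain ⟨S, hS, hST⟩ := hback (l + 1) (by omega) le_rfl T hT
    obtain ⟨g, hg0, hgl, hg⟩ := ih (fun i hki hil => hback i hki (by omega)) S hS
    refine ⟨Function.update g (l + 1) T, ?_, Function.update_self .., fun i hki hil => ?_⟩
    · rwa [Function.update_of_ne (by omega)]
    rcases (show i = l + 1 ∨ i ≤ l by omega) with rfl | hil
    · rwa [Function.update_self, Function.update_of_ne (by omega), Nat.add_sub_cancel, hgl]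
    · rw [Function.update_of_ne (by omega), Function.update_of_ne (by omega)]
      exact hg i hki hil

/-- Lemma 8.  Suppose every round has a uni instruction, none
of `ψ↾_k,…,ψ↾_l` is an equalizer, and all rounds `k,…,l` have mult
instructions.  If `set(f') ⊆ fire_k(f,ψ)` and `? ∉ set(f')` then the chain of
round transitions `f →[ψ↾_k]_k ⋯ →[ψ↾_l]_l f'` is possible (for all
sufficiently large `n`). -/
theorem any_frequency_reachable (A : Algo) (ψ : PhasePred) (k l : ℕ)
    (hk : 1 ≤ k) (hkl : k ≤ l) (hl : l ≤ A.r)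
    (huni : ∀ j, 1 ≤ j → j ≤ A.r → A.hasUni j)
    (hne : ∀ j, k ≤ j → j ≤ l → ¬ (ψ j).isEqualizer)
    (hm : ∀ j, k ≤ j → j ≤ l → A.hasMult j) :
    ∃ n₀ : ℕ, ∀ n : ℕ, n₀ ≤ n → ∀ f f' : Fin n → Val,
      twoValuedQ f →
      (∀ p, f' p = some aVal ∨ f' p = some bVal) →
      (∀ p, fire (A.rounds k) (ψ k) f (f' p)) →
      roundChain A ψ k l f f' := by
  obtain ⟨n₀, hn₀⟩ := eventually_atTop.1 <| (eventually_ge_atTop 4).and <|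
    (eventually_all_finset (Finset.Icc k l)).2 fun i _ =>
      eventually_largeSystem (A.rounds i) (ψ i)
  refine ⟨n₀, fun n hn f f' _ hf' hfire => ?_⟩
  obtain ⟨h4, hlarge⟩ := hn₀ n hn
  let P : (Fin n → Val) → Prop := fun T =>
    ∀ p, (T p = some aVal ∨ T p = some bVal) ∧ fire (A.rounds k) (ψ k) f (T p)
  refine roundChain_of_backward_invariant hk hkl (P := P)
    (fun T hT => roundTrans_of_forall_fire (hne k le_rfl hkl) fun p => (hT p).2)
    (fun i hki hil T hT => ?_) f' fun p => ⟨hf' p, hfire p⟩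
  obtain ⟨S, hST, htrans⟩ :=
    exists_range_subset_roundTrans (huni i (by omega) (hil.trans hl)) (hm i hki.le hil)
      (hne i hki.le hil) (hlarge i (Finset.mem_Icc.2 ⟨hki.le, hil⟩)) h4 fun p => (hT p).1
  refine ⟨S, fun p => ?_, htrans⟩
  obtain ⟨q, hq⟩ := hST ⟨p, rfl⟩
  exact hq ▸ hT q

end HO
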